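/- arXiv:2111.02723 — 2 statements merged into one kernel-verified Lean document; each statement's English description precedes it below -/
import Mathlib

section
/- For N ≥ 2, the map G ↦ G_{[1,N-1]} is a bijection between the set of HVGs on [N] realizable with distinct entries containing the edge 1N and the set of all HVGs on [N-1] realizable with distinct entries; hence |𝒢_{N,≠}^N| = |𝒢_{N-1,≠}|. -/
/-- The horizontal visibility graph of a data sequence `D : Fin N → ℝ`:
vertices `i ≠ j` are adjacent iff every entry strictly between them is
smaller than both `D i` and `D j`. -/
def HVG {N : ℕ} (D : Fin N → ℝ) : SimpleGraph (Fin N) where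
  Adj i j := i ≠ j ∧ ∀ k : Fin N, min i j < k → k < max i j → D k < D i ∧ D k < D j
  symm := by
    constructor
    intro i j h
    refine ⟨h.1.symm, fun k hk1 hk2 => ?_⟩
    rw [min_comm j i] at hk1
    rw [max_comm j i] at hk2
    exact (h.2 k hk1 hk2).symm
  loopless := by constructor; intro i h; exact h.1 rfl

/-- The set of HVGs on `N` vertices (arbitrary non-negative data sequences). -/
def HVGs (N : ℕ) : Set (SimpleGraph (Fin N)) :=
  {G | ∃ D : Fin N → ℝ, (∀ i, 0 ≤ D i) ∧ HVG D = G}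

/-- The set of HVGs on `N` vertices realizable by data sequences with pairwise
distinct entries. -/
def HVGsDistinct (N : ℕ) : Set (SimpleGraph (Fin N)) :=
  {G | ∃ D : Fin N → ℝ, Function.Injective D ∧ HVG D = G}

/-- A vertex `i` is non-nested in `G` if there is no edge `uv` with `u < i < v`. -/
def Nonnested {N : ℕ} (G : SimpleGraph (Fin N)) (i : Fin N) : Prop :=
  ¬ ∃ u v : Fin N, u < i ∧ i < v ∧ G.Adj u v

/-!
If `1N` is an edge, every interior entry lies below `d_1` and `d_N`, so `N` sees exactly those
`i` whose view to the right is not blocked inside `[1, N-1]`: `i` is adjacent to `N` iff no edge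
of `G_{[1,N-1]}` passes over `i`. Hence `G` is determined by `G_{[1,N-1]}`. Conversely, the HVG of
a sequence with distinct entries is unchanged when the largest entry left of the maximum is lifted
above the maximum; iterating moves the maximum to the first position, and appending an even larger
entry then produces the edge `1N` without changing the graph on `[1, N-1]`.
-/

open Function

theorem SimpleGraph.ext_of_lt {α : Type*} [LinearOrder α] {G H : SimpleGraph α}
    (h : ∀ i j, i < j → (G.Adj i j ↔ H.Adj i j)) : G = H := by
  ext i j
  rcases lt_trichotomy i j with hij | rfl | hij
  · exact h i j hij
  · simp
  · rw [G.adj_comm, H.adj_comm]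
    exact h j i hij

theorem hvg_adj_iff {n : ℕ} (D : Fin n → ℝ) {i j : Fin n} (hij : i < j) :
    (HVG D).Adj i j ↔ ∀ k, i < k → k < j → D k < D i ∧ D k < D j := by
  change i ≠ j ∧ _ ↔ _
  rw [min_eq_left hij.le, max_eq_right hij.le]
  exact and_iff_right hij.ne

theorem hvg_comap {m n : ℕ} (D : Fin n → ℝ) {f : Fin m → Fin n} (hf : StrictMono f)
    (hrange : (Set.range f).OrdConnected) : (HVG D).comap f = HVG (D ∘ f) := by
  refine SimpleGraph.ext_of_lt fun a b hab => ?_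
  rw [SimpleGraph.comap_adj, hvg_adj_iff D (hf hab), hvg_adj_iff _ hab]
  constructor
  · intro h c hac hcb
    exact h (f c) (hf hac) (hf hcb)
  · intro h k hak hkb
    obtain ⟨c, rfl⟩ := hrange.out (Set.mem_range_self a) (Set.mem_range_self b) ⟨hak.le, hkb.le⟩
    exact h c (hf.lt_iff_lt.1 hak) (hf.lt_iff_lt.1 hkb)

theorem hvg_comap_castSucc {n : ℕ} (D : Fin (n + 1) → ℝ) :
    (HVG D).comap Fin.castSucc = HVG (D ∘ Fin.castSucc) := by
  refine hvg_comap D Fin.strictMono_castSucc ⟨fun x _ y hy z hz => ?_⟩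
  rw [Fin.range_castSucc] at *
  exact lt_of_le_of_lt (Fin.le_def.1 hz.2) hy

theorem exists_hvg_adj_left {n : ℕ} {D : Fin n → ℝ} (hD : Injective D) {u₀ k : Fin n}
    (hu₀ : u₀ < k) (hlt : D k < D u₀) : ∃ u < k, D k < D u ∧ (HVG D).Adj u k := by
  obtain ⟨u, hu, hmax⟩ := Finset.exists_max_image
    (Finset.univ.filter fun u => u < k ∧ D k < D u) id ⟨u₀, by simp [hu₀, hlt]⟩
  simp only [Finset.mem_filter, Finset.mem_univ, true_and] at hu
  refine ⟨u, hu.1, hu.2, (hvg_adj_iff D hu.1).2 fun m hum hmk => ?_⟩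
  have hmk' : D m < D k := (le_of_not_gt fun h => (hmax m (by simp [hmk, h])).not_gt hum).lt_of_ne
    (hD.ne hmk.ne)
  exact ⟨hmk'.trans hu.2, hmk'⟩

theorem hvg_adj_iff_forall_not_adj {n : ℕ} {D : Fin n → ℝ} (hD : Injective D) {a i b : Fin n}
    (hai : a < i) (hib : i < b) (hab : (HVG D).Adj a b) :
    (HVG D).Adj i b ↔ ∀ u v, u < i → i < v → v < b → ¬ (HVG D).Adj u v := by
  have hab' := (hvg_adj_iff D (hai.trans hib)).1 hab
  constructor
  · intro hib' u v hui hiv hvb huv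
    exact ((hvg_adj_iff D (hui.trans hiv)).1 huv i hui hiv).2.asymm
      ((hvg_adj_iff D hib).1 hib' v hiv hvb).1
  · intro hnest
    obtain ⟨k, hk, hkmax⟩ := Finset.exists_max_image (Finset.Ico i b) D ⟨i, by simp [hib]⟩
    rw [Finset.mem_Ico] at hk
    rcases hk.1.eq_or_lt with rfl | hik
    · refine (hvg_adj_iff D hib).2 fun m him hmb => ⟨?_, (hab' m (hai.trans him) hmb).2⟩
      exact (hkmax m (by simp [him.le, hmb])).lt_of_ne (hD.ne him.ne')
    · -- the maximum `k` of `D` on `[i, b)` is seen from some `u < i`, and `u k` passes over `i`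
      obtain ⟨u, huk, hku, huk'⟩ :=
        exists_hvg_adj_left hD (hai.trans hik) (hab' k (hai.trans hik) hk.2).1
      have hui : u < i := lt_of_not_ge fun hiu =>
        (hkmax u (Finset.mem_Ico.2 ⟨hiu, huk.trans hk.2⟩)).not_gt hku
      exact (hnest u k hui hik hk.2 huk').elim

theorem hvg_adj_last_iff_nonnested {n : ℕ} {D : Fin (n + 1) → ℝ} (hD : Injective D)
    (h0 : (HVG D).Adj 0 (Fin.last n)) {i : Fin n} (hi : 0 < i.castSucc) :
    (HVG D).Adj i.castSucc (Fin.last n) ↔ Nonnested ((HVG D).comap Fin.castSucc) i := by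
  rw [hvg_adj_iff_forall_not_adj hD hi (Fin.castSucc_lt_last i) h0, Nonnested]
  simp only [not_exists, not_and, SimpleGraph.comap_adj]
  constructor
  · intro h u v hui hiv
    exact h _ _ (Fin.castSucc_lt_castSucc_iff.2 hui) (Fin.castSucc_lt_castSucc_iff.2 hiv)
      (Fin.castSucc_lt_last v)
  · intro h u v hui hiv hvb
    obtain ⟨u, rfl⟩ := Fin.exists_castSucc_eq.2 (hui.trans (Fin.castSucc_lt_last i)).ne
    obtain ⟨v, rfl⟩ := Fin.exists_castSucc_eq.2 hvb.ne
    exact h u v (Fin.castSucc_lt_castSucc_iff.1 hui) (Fin.castSucc_lt_castSucc_iff.1 hiv)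

theorem hvg_eq_of_comap_castSucc_eq {n : ℕ} {D₁ D₂ : Fin (n + 1) → ℝ} (hD₁ : Injective D₁)
    (hD₂ : Injective D₂) (h₁ : (HVG D₁).Adj 0 (Fin.last n)) (h₂ : (HVG D₂).Adj 0 (Fin.last n))
    (h : (HVG D₁).comap Fin.castSucc = (HVG D₂).comap Fin.castSucc) : HVG D₁ = HVG D₂ := by
  refine SimpleGraph.ext_of_lt fun x y hxy => ?_
  induction y using Fin.lastCases with
  | cast j =>
    obtain ⟨i, rfl⟩ := Fin.exists_castSucc_eq.2 (hxy.trans (Fin.castSucc_lt_last j)).ne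
    rw [← SimpleGraph.comap_adj, h, SimpleGraph.comap_adj]
  | last =>
    obtain ⟨i, rfl⟩ := Fin.exists_castSucc_eq.2 hxy.ne
    rcases (Fin.zero_le i.castSucc).eq_or_lt with hi | hi
    · rw [← hi]
      exact iff_of_true h₁ h₂
    · rw [hvg_adj_last_iff_nonnested hD₁ h₁ hi, hvg_adj_last_iff_nonnested hD₂ h₂ hi, h]

/-- `D s` already exceeds every entry before `t`, and the global maximum `D t` blocks every view
from the left past `t`, so lifting `D s` above `D t` changes no visibility. -/
theorem hvg_update_eq {n : ℕ} {D : Fin n → ℝ} (hD : Injective D) {s t : Fin n} (hst : s < t)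
    (ht : ∀ k, D k ≤ D t) (hs : ∀ k < t, D k ≤ D s) {c : ℝ} (hc : D t < c) :
    HVG (update D s c) = HVG D := by
  refine SimpleGraph.ext_of_lt fun i j hij => ?_
  rw [hvg_adj_iff _ hij, hvg_adj_iff _ hij]
  simp only [update_apply]
  grind

theorem exists_hvg_eq_forall_le_zero {n : ℕ} (hn : 0 < n) {E : Fin n → ℝ} (hE : Injective E) :
    ∃ E' : Fin n → ℝ, Injective E' ∧ HVG E' = HVG E ∧ ∀ k, E' k ≤ E' ⟨0, hn⟩ := by
  obtain ⟨t, -, ht⟩ := Finset.exists_max_image Finset.univ E ⟨⟨0, hn⟩, Finset.mem_univ _⟩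
  induction t using WellFoundedLT.induction generalizing E with
  | _ t ih =>
    rcases eq_or_ne t ⟨0, hn⟩ with rfl | ht0
    · exact ⟨E, hE, rfl, fun k => ht k (Finset.mem_univ k)⟩
    obtain ⟨s, hs, hsmax⟩ := Finset.exists_max_image (Finset.Iio t) E
      ⟨⟨0, hn⟩, Finset.mem_Iio.2 (Fin.lt_def.2 (Nat.pos_of_ne_zero fun h => ht0 (Fin.ext h)))⟩
    rw [Finset.mem_Iio] at hs
    have ht' : ∀ k, E k ≤ E t := fun k => ht k (Finset.mem_univ k)
    have hE' : Injective (update E s (E t + 1)) := fun a b hab => by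
      have := ht' a
      have := ht' b
      simp only [update_apply] at hab
      grind [hE.eq_iff]
    obtain ⟨E', hE'inj, hE'eq, hE'max⟩ := ih s hs hE' fun k _ => by
      have := ht' k
      simp only [update_apply]
      grind
    refine ⟨E', hE'inj, hE'eq.trans ?_, hE'max⟩
    exact hvg_update_eq hE hs ht' (fun k hk => hsmax k (Finset.mem_Iio.2 hk)) (lt_add_one _)

theorem exists_hvg_adj_zero_last_comap_eq {n : ℕ} (hn : 0 < n) {E : Fin n → ℝ}
    (hE : Injective E) : ∃ D : Fin (n + 1) → ℝ, Injective D ∧ (HVG D).Adj 0 (Fin.last n) ∧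
      (HVG D).comap Fin.castSucc = HVG E := by
  obtain ⟨E', hE'inj, hE'eq, hE'max⟩ := exists_hvg_eq_forall_le_zero hn hE
  set D : Fin (n + 1) → ℝ := Fin.snoc E' (E' ⟨0, hn⟩ + 1)
  have hzero : (0 : Fin (n + 1)) = Fin.castSucc ⟨0, hn⟩ := rfl
  refine ⟨D, Fin.snoc_injective_of_injective hE'inj ?_, ?_, ?_⟩
  · rintro ⟨k, hk⟩
    linarith [hE'max k]
  · rw [hzero]
    refine (hvg_adj_iff D (Fin.castSucc_lt_last _)).2 fun k hk0 hkl => ?_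
    obtain ⟨k, rfl⟩ := Fin.exists_castSucc_eq.2 hkl.ne
    have hk : E' k < E' ⟨0, hn⟩ :=
      (hE'max k).lt_of_ne (hE'inj.ne (Fin.castSucc_lt_castSucc_iff.1 hk0).ne')
    simp only [D, Fin.snoc_castSucc, Fin.snoc_last]
    exact ⟨hk, by linarith⟩
  · rw [hvg_comap_castSucc, ← hE'eq, Fin.snoc_comp_castSucc]

/-- for `N ≥ 2`, restriction to the first `N-1` vertices is a
bijection from `𝒢_{N,≠}^N` (HVGs with distinct entries containing the edge
`1N`) onto `𝒢_{N-1,≠}`; hence `|𝒢_{N,≠}^N| = |𝒢_{N-1,≠}|`. -/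
theorem hvg_restrict_bijection (N : ℕ) (hN : 2 ≤ N) :
    Set.BijOn
      (fun G : SimpleGraph (Fin N) =>
        G.comap fun a : Fin (N - 1) => (⟨a.val, by have := a.isLt; omega⟩ : Fin N))
      {G | G ∈ HVGsDistinct N ∧ G.Adj ⟨0, by omega⟩ ⟨N - 1, by omega⟩}
      (HVGsDistinct (N - 1)) ∧
    {G : SimpleGraph (Fin N) | G ∈ HVGsDistinct N ∧
        G.Adj ⟨0, by omega⟩ ⟨N - 1, by omega⟩}.ncard =
      (HVGsDistinct (N - 1)).ncard := by
  obtain ⟨n, rfl⟩ : ∃ n, N = n + 1 := ⟨N - 1, by omega⟩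
  have hbij : Set.BijOn (fun G : SimpleGraph (Fin (n + 1)) => G.comap Fin.castSucc)
      {G | G ∈ HVGsDistinct (n + 1) ∧ G.Adj 0 (Fin.last n)} (HVGsDistinct n) := by
    refine ⟨?_, ?_, ?_⟩
    · rintro _ ⟨⟨D, hD, rfl⟩, -⟩
      exact ⟨D ∘ Fin.castSucc, hD.comp (Fin.castSucc_injective n), (hvg_comap_castSucc D).symm⟩
    · rintro _ ⟨⟨D₁, hD₁, rfl⟩, h₁⟩ _ ⟨⟨D₂, hD₂, rfl⟩, h₂⟩ h
      exact hvg_eq_of_comap_castSucc_eq hD₁ hD₂ h₁ h₂ h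
    · rintro _ ⟨E, hE, rfl⟩
      obtain ⟨D, hD, h0, hDE⟩ := exists_hvg_adj_zero_last_comap_eq (by omega) hE
      exact ⟨HVG D, ⟨⟨D, hD, rfl⟩, h0⟩, hDE⟩
  exact ⟨hbij, hbij.ncard_eq⟩
end

section
/- For N ≥ 3, the map G ↦ G \ {1N} is a bijection from the set of HVGs on [N] containing the edge 1N to the set of HVGs on [N] not containing the edge 1N; consequently |𝒢_N| = 2·|𝒢_N^N|. -/
/-!
Both directions are realised on the data. An HVG without the edge `1N` arises from one with it
by capping every entry at the largest interior entry `M`: the interior is unchanged, the ends drop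
to at most `M`, so the interior vertex of height `M` now blocks `1N`, while every other edge `ij`
keeps an interior end of height at most `M` and so is unaffected. Conversely, call a vertex a
record if it is a weak maximum of everything on its left or of everything on its right. Between
two records with no record in between every entry is lower than both, and an entry below both
ends of an edge is no record; hence raising all interior records to the global maximum and both ends above it adds
the edge `1N` and changes nothing else. Deleting `1N` is then the restriction of `G ↦ G \ 1N` to
a class closed under deleting and adding that edge, which is a bijection in any Boolean algebra.
-/

open SimpleGraph

theorem Set.bijOn_sdiff {α : Type*} [GeneralizedBooleanAlgebra α] {S : Set α} {b : α}
    (hsdiff : ∀ a ∈ S, b ≤ a → a \ b ∈ S) (hsup : ∀ a ∈ S, Disjoint a b → a ⊔ b ∈ S) :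
    Set.BijOn (· \ b) {a ∈ S | b ≤ a} {a ∈ S | Disjoint a b} := by
  refine ⟨fun a ⟨ha, hba⟩ => ⟨hsdiff a ha hba, disjoint_sdiff_self_left⟩, ?_, ?_⟩
  · intro a₁ ⟨_, hb₁⟩ a₂ ⟨_, hb₂⟩ h
    rw [← sdiff_sup_cancel hb₁, ← sdiff_sup_cancel hb₂]
    exact congrArg (· ⊔ b) h
  · intro a ⟨ha, hdisj⟩
    refine ⟨a ⊔ b, ⟨hsup a ha hdisj, le_sup_right⟩, ?_⟩
    change (a ⊔ b) \ b = a
    rw [sup_sdiff_right_self, hdisj.sdiff_eq_left]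

theorem Set.ncard_eq_two_mul_of_bijOn {α : Type*} {S : Set α} (hS : S.Finite) {p : α → Prop}
    {f : α → α} (hf : Set.BijOn f {a ∈ S | p a} {a ∈ S | ¬p a}) :
    S.ncard = 2 * {a ∈ S | p a}.ncard := by
  have hdisj : Disjoint {a ∈ S | p a} {a ∈ S | ¬p a} := by
    rw [Set.disjoint_left]
    exact fun _ h₁ h₂ => h₂.2 h₁.2
  calc S.ncard = ({a ∈ S | p a} ∪ {a ∈ S | ¬p a}).ncard := by
        rw [← Set.sep_or]; simp only [em, and_true, Set.ofPred_mem_eq]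
    _ = 2 * {a ∈ S | p a}.ncard := by
        rw [Set.ncard_union_eq hdisj (hS.subset (Set.sep_subset _ _))
          (hS.subset (Set.sep_subset _ _)), ← hf.ncard_eq, two_mul]

theorem SimpleGraph.ext_of_adj_of_lt {V : Type*} [LinearOrder V] {G H : SimpleGraph V}
    (h : ∀ i j, i < j → (G.Adj i j ↔ H.Adj i j)) : G = H := by
  ext i j
  rcases lt_trichotomy i j with hij | rfl | hij
  · exact h i j hij
  · simp
  · rw [G.adj_comm, H.adj_comm]
    exact h j i hij

section Interval

variable {ι : Type*} [LinearOrder ι] {z w i j : ι}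

theorem edge_adj_iff_of_lt (hz : IsBot z) (hw : IsTop w) (hij : i < j) :
    (edge z w).Adj i j ↔ i = z ∧ j = w := by
  rw [edge_adj]
  constructor
  · rintro ⟨h | ⟨rfl, rfl⟩, -⟩
    · exact h
    · exact absurd hij (hz i).not_gt
  · rintro ⟨rfl, rfl⟩
    exact ⟨Or.inl ⟨rfl, rfl⟩, hij.ne⟩

theorem mem_Ioo_or_mem_Ioo (hz : IsBot z) (hw : IsTop w) (hij : i < j) (hne : ¬(i = z ∧ j = w)) :
    i ∈ Set.Ioo z w ∨ j ∈ Set.Ioo z w := by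
  by_cases hiz : i = z
  · subst hiz
    exact .inr ⟨hij, (hw j).lt_of_ne fun h => hne ⟨rfl, h⟩⟩
  · exact .inl ⟨(hz i).lt_of_ne (Ne.symm hiz), hij.trans_le (hw j)⟩

end Interval

section Records

variable {ι α : Type*} [LinearOrder ι] [LinearOrder α] {D : ι → α} {i j k z w : ι}

def IsRecord (D : ι → α) (i : ι) : Prop :=
  (∀ k < i, D k ≤ D i) ∨ ∀ k, i < k → D k ≤ D i

theorem IsBot.isRecord (hz : IsBot z) : IsRecord D z :=
  .inl fun k hk => absurd hk (hz k).not_gt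

theorem IsTop.isRecord (hw : IsTop w) : IsRecord D w :=
  .inr fun k hk => absurd hk (hw k).not_gt

theorem not_isRecord_of_lt_of_lt (hk : k ∈ Set.Ioo i j) (hi : D k < D i) (hj : D k < D j) :
    ¬IsRecord D k := by
  rintro (hl | hr)
  · exact (hl i hk.1).not_gt hi
  · exact (hr j hk.2).not_gt hj

theorem mem_Ioo_of_not_isRecord (hz : IsBot z) (hw : IsTop w) (hk : ¬IsRecord D k) :
    k ∈ Set.Ioo z w :=
  ⟨(hz k).lt_of_ne fun h => hk (h ▸ hz.isRecord), (hw k).lt_of_ne fun h => hk (h ▸ hw.isRecord)⟩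

theorem apply_lt_of_not_isRecord {g : ι} (hg : ∀ l, D l ≤ D g) (hk : ¬IsRecord D k) :
    D k < D g := by
  simp only [IsRecord, not_or, not_forall, not_le] at hk
  obtain ⟨⟨l, -, hl⟩, -⟩ := hk
  exact hl.trans_le (hg l)

variable [LocallyFiniteOrder ι]

/-- A highest entry strictly between `i` and `j` that reaches `D i` would again be a record. -/
theorem IsRecord.apply_lt_of_mem_Ioo_left (hi : IsRecord D i)
    (hno : ∀ t ∈ Set.Ioo i j, ¬IsRecord D t) (hk : k ∈ Set.Ioo i j) : D k < D i := by
  by_contra! hik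
  obtain ⟨t, ht, hmax⟩ := (Finset.Ioo i j).exists_max_image D ⟨k, Finset.mem_Ioo.2 hk⟩
  rw [Finset.mem_Ioo] at ht
  have hit : D i ≤ D t := hik.trans (hmax k (Finset.mem_Ioo.2 hk))
  refine hno t ht ?_
  rcases hi with hl | hr
  · left
    intro l hlt
    rcases lt_trichotomy l i with hli | rfl | hil
    · exact (hl l hli).trans hit
    · exact hit
    · exact hmax l (Finset.mem_Ioo.2 ⟨hil, hlt.trans ht.2⟩)
  · exact .inr fun l htl => (hr l (ht.1.trans htl)).trans hit

theorem IsRecord.apply_lt_of_mem_Ioo_right (hj : IsRecord D j)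
    (hno : ∀ t ∈ Set.Ioo i j, ¬IsRecord D t) (hk : k ∈ Set.Ioo i j) : D k < D j := by
  by_contra! hjk
  obtain ⟨t, ht, hmax⟩ := (Finset.Ioo i j).exists_max_image D ⟨k, Finset.mem_Ioo.2 hk⟩
  rw [Finset.mem_Ioo] at ht
  have hjt : D j ≤ D t := hjk.trans (hmax k (Finset.mem_Ioo.2 hk))
  refine hno t ht ?_
  rcases hj with hl | hr
  · exact .inl fun l hlt => (hl l (hlt.trans ht.2)).trans hjt
  · right
    intro l htl
    rcases lt_trichotomy l j with hlj | rfl | hjl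
    · exact hmax l (Finset.mem_Ioo.2 ⟨ht.1.trans htl, hlj⟩)
    · exact hjt
    · exact (hr l hjl).trans hjt

end Records

section HVG

variable {N : ℕ} {D : Fin N → ℝ} {z w i j : Fin N}

theorem hvg_adj_iff_of_lt (hij : i < j) :
    (HVG D).Adj i j ↔ ∀ k ∈ Set.Ioo i j, D k < D i ∧ D k < D j := by
  simp only [HVG, ne_eq, hij.ne, not_false_eq_true, true_and, min_eq_left hij.le,
    max_eq_right hij.le, Set.mem_Ioo, and_imp]

theorem hvg_min_eq_sdiff_edge (hz : IsBot z) (hw : IsTop w) {m : Fin N} (hm : m ∈ Set.Ioo z w)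
    (hmax : ∀ k ∈ Set.Ioo z w, D k ≤ D m) :
    HVG (fun k => min (D k) (D m)) = HVG D \ edge z w := by
  refine ext_of_adj_of_lt fun i j hij => ?_
  rw [sdiff_adj, edge_adj_iff_of_lt hz hw hij, hvg_adj_iff_of_lt hij, hvg_adj_iff_of_lt hij]
  by_cases hzw : i = z ∧ j = w
  · obtain ⟨rfl, rfl⟩ := hzw
    simp only [and_self, not_true_eq_false, and_false, iff_false, not_forall]
    exact ⟨m, hm, fun h => (h.1.trans_le (min_le_right _ _)).ne (min_self _)⟩
  · simp only [hzw, not_false_eq_true, and_true]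
    refine forall₂_congr fun k hk => ?_
    have hkD : min (D k) (D m) = D k := min_eq_left (hmax k (Set.Ioo_subset_Ioo (hz i) (hw j) hk))
    rw [hkD, lt_min_iff, lt_min_iff]
    rcases mem_Ioo_or_mem_Ioo hz hw hij hzw with hi | hj
    · have := hmax i hi
      constructor
      · exact fun h => ⟨h.1.1, h.2.1⟩
      · exact fun h => ⟨⟨h.1, h.1.trans_le this⟩, ⟨h.2, h.1.trans_le this⟩⟩
    · have := hmax j hj
      constructor
      · exact fun h => ⟨h.1.1, h.2.1⟩
      · exact fun h => ⟨⟨h.1, h.2.trans_le this⟩, ⟨h.2, h.2.trans_le this⟩⟩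

noncomputable def raiseRecords (D : Fin N → ℝ) (z w g : Fin N) : Fin N → ℝ :=
  open Classical in
  fun k => if k ∈ Set.Ioo z w then (if IsRecord D k then D g else D k) else D g + 1

variable {g : Fin N}

theorem raiseRecords_of_not_mem (hk : k ∉ Set.Ioo z w) : raiseRecords D z w g k = D g + 1 := by
  simp [raiseRecords, hk]

theorem raiseRecords_of_isRecord (hk : k ∈ Set.Ioo z w) (hr : IsRecord D k) :
    raiseRecords D z w g k = D g := by
  simp [raiseRecords, hk, hr]

theorem raiseRecords_of_not_isRecord (hz : IsBot z) (hw : IsTop w) (hr : ¬IsRecord D k) :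
    raiseRecords D z w g k = D k := by
  simp [raiseRecords, mem_Ioo_of_not_isRecord hz hw hr, hr]

theorem raiseRecords_le (hg : ∀ l, D l ≤ D g) (hk : k ∈ Set.Ioo z w) :
    raiseRecords D z w g k ≤ D g := by
  unfold raiseRecords
  split_ifs
  exacts [le_rfl, hg k]

theorem lt_raiseRecords (hg : ∀ l, D l ≤ D g) {k x : Fin N} (h : D k < D x) :
    D k < raiseRecords D z w g x := by
  have := h.trans_le (hg x)
  unfold raiseRecords
  split_ifs <;> linarith

theorem hvg_raiseRecords_adj_of_adj (hz : IsBot z) (hw : IsTop w) (hg : ∀ l, D l ≤ D g)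
    (hij : i < j) (h : (HVG D).Adj i j) : (HVG (raiseRecords D z w g)).Adj i j := by
  rw [hvg_adj_iff_of_lt hij] at h ⊢
  intro k hk
  obtain ⟨hki, hkj⟩ := h k hk
  rw [raiseRecords_of_not_isRecord hz hw (not_isRecord_of_lt_of_lt hk hki hkj)]
  exact ⟨lt_raiseRecords hg hki, lt_raiseRecords hg hkj⟩

theorem hvg_adj_of_raiseRecords_adj (hz : IsBot z) (hw : IsTop w) (hg : ∀ l, D l ≤ D g)
    (hij : i < j) (hzw : ¬(i = z ∧ j = w)) (h : (HVG (raiseRecords D z w g)).Adj i j) :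
    (HVG D).Adj i j := by
  set E := raiseRecords D z w g
  rw [hvg_adj_iff_of_lt hij] at h ⊢
  -- An interior end caps the whole range strictly below `D g`, which leaves no room for records.
  have hbelow : ∀ t ∈ Set.Ioo i j, E t < D g := by
    rcases mem_Ioo_or_mem_Ioo hz hw hij hzw with hi | hj
    · exact fun t ht => (h t ht).1.trans_le (raiseRecords_le hg hi)
    · exact fun t ht => (h t ht).2.trans_le (raiseRecords_le hg hj)
  have hno : ∀ t ∈ Set.Ioo i j, ¬IsRecord D t := fun t ht hr => (hbelow t ht).ne
    (raiseRecords_of_isRecord (Set.Ioo_subset_Ioo (hz i) (hw j) ht) hr)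
  intro k hk
  have hEk : E k = D k := raiseRecords_of_not_isRecord hz hw (hno k hk)
  constructor
  · by_cases hi : IsRecord D i
    · exact hi.apply_lt_of_mem_Ioo_left hno hk
    · simpa [hEk, E, raiseRecords_of_not_isRecord hz hw hi] using (h k hk).1
  · by_cases hj : IsRecord D j
    · exact hj.apply_lt_of_mem_Ioo_right hno hk
    · simpa [hEk, E, raiseRecords_of_not_isRecord hz hw hj] using (h k hk).2

theorem hvg_raiseRecords_eq_sup_edge (hz : IsBot z) (hw : IsTop w) (hg : ∀ l, D l ≤ D g) :
    HVG (raiseRecords D z w g) = HVG D ⊔ edge z w := by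
  refine ext_of_adj_of_lt fun i j hij => ?_
  rw [sup_adj, edge_adj_iff_of_lt hz hw hij]
  by_cases hzw : i = z ∧ j = w
  · obtain ⟨rfl, rfl⟩ := hzw
    simp only [and_self, or_true, iff_true, hvg_adj_iff_of_lt hij]
    intro k hk
    rw [raiseRecords_of_not_mem Set.left_notMem_Ioo, raiseRecords_of_not_mem Set.right_notMem_Ioo]
    have := raiseRecords_le hg hk
    constructor <;> linarith
  · rw [or_iff_left hzw]
    exact ⟨hvg_adj_of_raiseRecords_adj hz hw hg hij hzw, hvg_raiseRecords_adj_of_adj hz hw hg hij⟩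

theorem sdiff_edge_mem_HVGs (hz : IsBot z) (hw : IsTop w) (hzw : (Set.Ioo z w).Nonempty)
    {G : SimpleGraph (Fin N)} (hG : G ∈ HVGs N) : G \ edge z w ∈ HVGs N := by
  obtain ⟨D, hD, rfl⟩ := hG
  obtain ⟨m, hm, hmax⟩ := (Finset.Ioo z w).exists_max_image D
    (by rwa [← Finset.coe_nonempty, Finset.coe_Ioo])
  rw [Finset.mem_Ioo] at hm
  exact ⟨_, fun k => le_min (hD k) (hD m),
    hvg_min_eq_sdiff_edge hz hw hm fun k hk => hmax k (Finset.mem_Ioo.2 hk)⟩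

theorem sup_edge_mem_HVGs (hz : IsBot z) (hw : IsTop w) {G : SimpleGraph (Fin N)}
    (hG : G ∈ HVGs N) : G ⊔ edge z w ∈ HVGs N := by
  obtain ⟨D, hD, rfl⟩ := hG
  obtain ⟨g, -, hg⟩ := Finset.univ.exists_max_image D ⟨z, Finset.mem_univ z⟩
  refine ⟨raiseRecords D z w g, fun k => ?_, hvg_raiseRecords_eq_sup_edge hz hw fun l => hg l
    (Finset.mem_univ l)⟩
  have := hD k
  have := hD g
  unfold raiseRecords
  split_ifs <;> linarith

end HVG

/-- for `N ≥ 3`, deleting the edge `1N` is a bijection from the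
HVGs on `[N]` containing the edge `1N` onto those not containing it; hence
`|𝒢_N| = 2 ⬝ |𝒢_N^N|`. -/
theorem hvg_delete_top_edge_bijection (N : ℕ) (hN : 3 ≤ N) :
    Set.BijOn
      (fun G : SimpleGraph (Fin N) =>
        G.deleteEdges {s((⟨0, by omega⟩ : Fin N), (⟨N - 1, by omega⟩ : Fin N))})
      {G | G ∈ HVGs N ∧ G.Adj ⟨0, by omega⟩ ⟨N - 1, by omega⟩}
      {G | G ∈ HVGs N ∧ ¬ G.Adj ⟨0, by omega⟩ ⟨N - 1, by omega⟩} ∧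
    (HVGs N).ncard =
      2 * {G : SimpleGraph (Fin N) | G ∈ HVGs N ∧
            G.Adj ⟨0, by omega⟩ ⟨N - 1, by omega⟩}.ncard := by
  set z : Fin N := ⟨0, by omega⟩
  set w : Fin N := ⟨N - 1, by omega⟩
  have hz : IsBot z := fun i => Fin.le_def.2 (Nat.zero_le _)
  have hw : IsTop w := fun i => Fin.le_def.2 (by simp [w]; omega)
  have hzw : z ≠ w := Fin.ne_of_val_ne (by simp [z, w]; omega)
  have hint : (Set.Ioo z w).Nonempty :=
    ⟨⟨1, by omega⟩, Fin.lt_def.2 (by simp [z]), Fin.lt_def.2 (by simp [w]; omega)⟩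
  have hbij : Set.BijOn (· \ edge z w) {G | G ∈ HVGs N ∧ G.Adj z w}
      {G | G ∈ HVGs N ∧ ¬G.Adj z w} := by
    simpa only [edge_le_iff, hzw, false_or, disjoint_edge] using
      Set.bijOn_sdiff (fun G hG _ => sdiff_edge_mem_HVGs hz hw hint hG)
        (fun G hG _ => sup_edge_mem_HVGs hz hw hG)
  exact ⟨hbij, Set.ncard_eq_two_mul_of_bijOn (Set.toFinite _) hbij⟩
end
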